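/- arXiv:2101.05949 — 3 statements merged into one kernel-verified Lean document; each statement's English description precedes it below -/
import Mathlib

section
/- Let d ≥ 1 and x ∈ ℝ^d. With J_d as defined via the infimum over probability vectors, one has J_d(x) ≥ (1/2)‖x‖₁² ≥ (1/2)‖x‖₂². -/
open scoped BigOperators

/-- The one-dimensional rate function `J`, valued in extended reals. -/
noncomputable def J1 (t : ℝ) : EReal :=
  if |t| ≤ 1 then
    ((1 / 2 * (1 + t) * Real.log (1 + t) + 1 / 2 * (1 - t) * Real.log (1 - t) : ℝ) : EReal)
  else ⊤

/-- One summand `uᵢ (J(xᵢ/uᵢ) + log(d uᵢ))` in the definition of `J_d`. -/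
noncomputable def Jterm (d : ℕ) (xi ui : ℝ) : EReal :=
  if ui = 0 then (if xi = 0 then (0 : EReal) else ⊤)
  else ((ui : ℝ) : EReal) * (J1 (xi / ui) + ((Real.log (d * ui) : ℝ) : EReal))

/-- The `d`-dimensional rate function, an infimum over probability vectors. -/
noncomputable def Jd (d : ℕ) (x : Fin d → ℝ) : EReal :=
  ⨅ u ∈ {u : Fin d → ℝ | (∀ i, 0 ≤ u i ∧ u i ≤ 1) ∧ ∑ i, u i = 1},
    ∑ i, Jterm d (x i) (u i)
/-!
Since `J t ≥ t² / 2`, each summand satisfies `u (J (x / u) + log (d u)) ≥ x² / (2u) + u log (d u)`.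
Summing, the entropy part `∑ u log (d u)` is nonnegative, and Cauchy–Schwarz against the
probability vector `u` gives `∑ x² / u ≥ (∑ |x|)²`. A coordinate with `u i = 0 ≠ x i` makes the
sum `⊤`. For `J t ≥ t² / 2`, the even function `(1 + t) log (1 + t) + (1 - t) log (1 - t) - t²`
vanishes at `0` and has derivative `log (1 + t) - log (1 - t) - 2t ≥ 0` on `[0, 1)`, by the power
series of `artanh`.
-/

open Real Finset

theorem Real.two_mul_le_log_one_add_sub_log_one_sub {t : ℝ} (h0 : 0 ≤ t) (h1 : t < 1) :
    2 * t ≤ log (1 + t) - log (1 - t) := by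
  have hsum := hasSum_log_sub_log_of_abs_lt_one (abs_lt.2 ⟨by linarith, h1⟩)
  simpa using le_hasSum hsum 0 fun k _ ↦ by positivity

theorem Real.sq_le_one_add_mul_log_add_one_sub_mul_log {t : ℝ} (ht : |t| ≤ 1) :
    t ^ 2 ≤ (1 + t) * log (1 + t) + (1 - t) * log (1 - t) := by
  set g : ℝ → ℝ := fun t ↦ (1 + t) * log (1 + t) + (1 - t) * log (1 - t) - t ^ 2
  have hg_cont : Continuous g := by
    -- continuity of `x log x` at `0` lets the monotonicity argument reach `t = 1`
    have := continuous_mul_log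
    fun_prop
  have hg_deriv : ∀ s ∈ interior (Set.Icc (0 : ℝ) 1),
      HasDerivWithinAt g (log (1 + s) - log (1 - s) - 2 * s) (interior (Set.Icc 0 1)) s := by
    rw [interior_Icc]
    rintro s ⟨hs0, hs1⟩
    have hplus := (hasDerivAt_mul_log (x := 1 + s) (by linarith)).comp s
      ((hasDerivAt_id s).const_add 1)
    have hminus := (hasDerivAt_mul_log (x := 1 - s) (by linarith)).comp s
      ((hasDerivAt_id s).const_sub 1)
    exact (((hplus.add hminus).sub (hasDerivAt_pow 2 s)).congr_deriv
      (by norm_num; ring)).hasDerivWithinAt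
  have hg_mono : MonotoneOn g (Set.Icc 0 1) :=
    monotoneOn_of_hasDerivWithinAt_nonneg (convex_Icc 0 1) hg_cont.continuousOn hg_deriv
      fun s hs ↦ by
        rw [interior_Icc] at hs
        linarith [two_mul_le_log_one_add_sub_log_one_sub hs.1.le hs.2]
  have hg_abs : 0 ≤ g |t| := by
    simpa [g] using hg_mono (Set.left_mem_Icc.2 zero_le_one) ⟨abs_nonneg t, ht⟩ (abs_nonneg t)
  rcases abs_cases t with ⟨habs, -⟩ | ⟨habs, -⟩ <;> simp only [g, habs] at hg_abs
  · linarith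
  · rw [neg_sq, sub_neg_eq_add, ← sub_eq_add_neg] at hg_abs
    linarith

theorem coe_sq_div_two_le_J1 (t : ℝ) : ((t ^ 2 / 2 : ℝ) : EReal) ≤ J1 t := by
  unfold J1
  split_ifs with ht
  · exact EReal.coe_le_coe_iff.2 <| by
      linarith [sq_le_one_add_mul_log_add_one_sub_mul_log ht]
  · exact le_top

theorem coe_sq_div_add_mul_log_le_Jterm (d : ℕ) (xi : ℝ) {ui : ℝ} (hu : 0 ≤ ui) :
    ((xi ^ 2 / (2 * ui) + ui * log (d * ui) : ℝ) : EReal) ≤ Jterm d xi ui := by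
  rcases hu.eq_or_lt with rfl | hu
  · by_cases hx : xi = 0 <;> simp [Jterm, hx]
  · rw [Jterm, if_neg hu.ne']
    calc ((xi ^ 2 / (2 * ui) + ui * log (d * ui) : ℝ) : EReal)
        = (ui : EReal) * (((xi / ui) ^ 2 / 2 : ℝ) + (log (d * ui) : EReal)) := by
          rw [← EReal.coe_add, ← EReal.coe_mul]
          congr 1
          field_simp
      _ ≤ (ui : EReal) * (J1 (xi / ui) + (log (d * ui) : EReal)) := by
          gcongr
          exact coe_sq_div_two_le_J1 _

theorem Jterm_ne_bot (d : ℕ) (xi : ℝ) {ui : ℝ} (hu : 0 ≤ ui) : Jterm d xi ui ≠ ⊥ :=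
  ne_bot_of_le_ne_bot (EReal.coe_ne_bot _) (coe_sq_div_add_mul_log_le_Jterm d xi hu)

theorem EReal.coe_finset_sum {ι : Type*} (s : Finset ι) (f : ι → ℝ) :
    ((∑ i ∈ s, f i : ℝ) : EReal) = ∑ i ∈ s, (f i : EReal) :=
  map_sum (⟨⟨Real.toEReal, EReal.coe_zero⟩, EReal.coe_add⟩ : ℝ →+ EReal) f s

theorem EReal.finset_sum_ne_bot {ι : Type*} {s : Finset ι} {f : ι → EReal}
    (h : ∀ i ∈ s, f i ≠ ⊥) : ∑ i ∈ s, f i ≠ ⊥ := by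
  classical
  induction s using Finset.induction_on with
  | empty => simp
  | insert i s hi ih =>
    rw [sum_insert hi, Ne, EReal.add_eq_bot_iff, not_or]
    exact ⟨h i (mem_insert_self i s), ih fun j hj ↦ h j (mem_insert_of_mem hj)⟩

theorem sum_mul_log_card_mul_nonneg {ι : Type*} [Fintype ι] {u : ι → ℝ} (hu : ∀ i, 0 ≤ u i)
    (hsum : ∑ i, u i = 1) : 0 ≤ ∑ i, u i * log (Fintype.card ι * u i) := by
  set n : ℝ := (Fintype.card ι : ℝ)
  have hι : Nonempty ι := by
    by_contra h
    simp [not_nonempty_iff.1 h] at hsum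
  have hn : 0 < n := Nat.cast_pos.2 Fintype.card_pos
  have key : ∑ i, (n * u i - 1) ≤ ∑ i, n * u i * log (n * u i) :=
    sum_le_sum fun i _ ↦ self_sub_one_le_mul_log (by positivity [hu i])
  simp only [sum_sub_distrib, ← mul_sum, hsum, mul_assoc, sum_const, card_univ, nsmul_one] at key
  exact nonneg_of_mul_nonneg_right (by linarith) hn

theorem sq_sum_abs_le_sum_sq_div {ι : Type*} (s : Finset ι) {x u : ι → ℝ}
    (hu : ∀ i ∈ s, 0 ≤ u i) (hsum : ∑ i ∈ s, u i = 1) (hx : ∀ i ∈ s, u i = 0 → x i = 0) :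
    (∑ i ∈ s, |x i|) ^ 2 ≤ ∑ i ∈ s, x i ^ 2 / u i := by
  simpa [hsum] using sum_sq_le_sum_mul_sum_of_sq_le_mul s
    (fun i hi ↦ div_nonneg (sq_nonneg (x i)) (hu i hi)) hu fun i hi ↦ by
      rcases (hu i hi).eq_or_lt with h | h
      · simp [hx i hi h.symm]
      · rw [sq_abs, div_mul_cancel₀ _ h.ne']

theorem half_mul_sq_sum_abs_le_sum_Jterm {d : ℕ} (x u : Fin d → ℝ) (hu : ∀ i, 0 ≤ u i)
    (hsum : ∑ i, u i = 1) :
    ((1 / 2 * (∑ i, |x i|) ^ 2 : ℝ) : EReal) ≤ ∑ i, Jterm d (x i) (u i) := by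
  by_cases hx : ∀ i, u i = 0 → x i = 0
  · calc ((1 / 2 * (∑ i, |x i|) ^ 2 : ℝ) : EReal)
        ≤ ((∑ i, (x i ^ 2 / (2 * u i) + u i * log (d * u i)) : ℝ) : EReal) := by
          have hCS := sq_sum_abs_le_sum_sq_div univ (fun i _ ↦ hu i) hsum fun i _ ↦ hx i
          have hent := sum_mul_log_card_mul_nonneg hu hsum
          rw [Fintype.card_fin] at hent
          simp only [sum_add_distrib, mul_comm (2 : ℝ), ← div_div, ← sum_div]
          exact EReal.coe_le_coe_iff.2 (by linarith)
      _ = ∑ i, ((x i ^ 2 / (2 * u i) + u i * log (d * u i) : ℝ) : EReal) :=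
          EReal.coe_finset_sum _ _
      _ ≤ ∑ i, Jterm d (x i) (u i) :=
          sum_le_sum fun i _ ↦ coe_sq_div_add_mul_log_le_Jterm d (x i) (hu i)
  · push Not at hx
    obtain ⟨i, hui, hxi⟩ := hx
    have htop : ∑ j, Jterm d (x j) (u j) = ⊤ := by
      rw [← add_sum_erase _ _ (mem_univ i), show Jterm d (x i) (u i) = ⊤ by simp [Jterm, hui, hxi],
        EReal.top_add_of_ne_bot (EReal.finset_sum_ne_bot fun j _ ↦ Jterm_ne_bot d (x j) (hu j))]
    exact htop ▸ le_top

theorem stmt2_general (d : ℕ) (x : Fin d → ℝ) :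
    (((1 / 2 * (∑ i, |x i|) ^ 2 : ℝ)) : EReal) ≤ Jd d x ∧
    (1 / 2 * ∑ i, (x i) ^ 2 : ℝ) ≤ 1 / 2 * (∑ i, |x i|) ^ 2 := by
  refine ⟨le_iInf₂ fun u ⟨hu, hsum⟩ ↦
    half_mul_sq_sum_abs_le_sum_Jterm x u (fun i ↦ (hu i).1) hsum, ?_⟩
  have h := sum_sq_le_sq_sum_of_nonneg (s := univ) fun i _ ↦ abs_nonneg (x i)
  simp only [sq_abs] at h
  linarith

/-- `J_d(x) ≥ (1/2)‖x‖₁² ≥ (1/2)‖x‖₂²`. -/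
theorem stmt2 (d : ℕ) (hd : 1 ≤ d) (x : Fin d → ℝ) :
    (((1 / 2 * (∑ i, |x i|) ^ 2 : ℝ)) : EReal) ≤ Jd d x ∧
    (1 / 2 * ∑ i, (x i) ^ 2 : ℝ) ≤ 1 / 2 * (∑ i, |x i|) ^ 2 :=
  stmt2_general d x
end

section
/- Let f : ℝ^d → [0,∞) satisfy f(x) ≤ C e^{−c‖x‖²} for all ‖x‖² ≥ 2/c (with C, c > 0), and f(x) ≤ C'(1 + ‖x‖^{2−d}) for d ≥ 3 (resp. f(x) ≤ C'(1 + log(1/‖x‖)⁺) for d = 2) near 0. If α ∈ (d/2, 2) and β > 0, then ∫_{ℝ^d × (1,∞)} min(e^{βw} f(x), 1) · α w^{−(1+α)} dx dw < ∞. -/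
open MeasureTheory Set Module
open scoped ENNReal

/-!
Put `K = max (2β/c) (2/c)`. For `w > 1`, the truncation `min (e^{βw} f x) 1` is at most `1`, and
when `K w ≤ ‖x‖²` the Gaussian decay of `f` beats `e^{βw}`, leaving at most `C e^{-c‖x‖²/2}`.
Integrating against the Pareto density `α w^{-(1+α)}` on `(1, ∞)` bounds the inner integral by
`max (‖x‖²/K) 1 ^ (-α) + C e^{-c‖x‖²/2}`, and both terms are integrable in `x` because `d < 2α`.
-/

lemma lintegral_Ioi_mul_rpow_neg_one_sub {α a : ℝ} (hα : 0 < α) (ha : 0 < a) :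
    ∫⁻ w in Ioi a, ENNReal.ofReal (α * w ^ (-(1 + α))) = ENNReal.ofReal (a ^ (-α)) := by
  rw [← ofReal_integral_eq_lintegral_ofReal]
  · rw [integral_const_mul, integral_Ioi_rpow_of_lt (by linarith) ha,
      show -(1 + α) + 1 = -α by ring]
    congr 1
    field_simp
  · exact (integrableOn_Ioi_rpow_of_lt (by linarith) ha).const_mul α
  · filter_upwards [ae_restrict_mem measurableSet_Ioi] with w hw
    have : 0 < w := ha.trans hw
    positivity

lemma setLIntegral_Ioi_one_cutoff_le {α t B : ℝ} (hα : 0 < α) {g : ℝ → ℝ} (hg : ∀ w, g w ≤ 1)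
    (hgB : ∀ w, 1 < w → w ≤ t → g w ≤ B) :
    ∫⁻ w in Ioi 1, ENNReal.ofReal (g w * (α * w ^ (-(1 + α)))) ≤
      ENNReal.ofReal (max t 1 ^ (-α)) + ENNReal.ofReal B := by
  set p : ℝ → ℝ≥0∞ := fun w ↦ ENNReal.ofReal (α * w ^ (-(1 + α)))
  have hp : Measurable p := by fun_prop
  have hsplit : ∀ w ∈ Ioi (1 : ℝ),
      ENNReal.ofReal (g w * (α * w ^ (-(1 + α)))) ≤
        (Ioi t).indicator p w + ENNReal.ofReal B * p w := by
    intro w (hw : 1 < w)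
    rw [ENNReal.ofReal_mul' (by have : 0 < w := one_pos.trans hw; positivity)]
    by_cases hwt : w ≤ t
    · exact le_add_left (mul_le_mul_left (ENNReal.ofReal_le_ofReal (hgB w hw hwt)) _)
    · rw [indicator_of_mem (show w ∈ Ioi t from not_le.mp hwt)]
      exact le_add_right (mul_le_of_le_one_left' (ENNReal.ofReal_le_one.mpr (hg w)))
  calc ∫⁻ w in Ioi 1, ENNReal.ofReal (g w * (α * w ^ (-(1 + α))))
      ≤ ∫⁻ w in Ioi 1, ((Ioi t).indicator p w + ENNReal.ofReal B * p w) :=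
        setLIntegral_mono ((hp.indicator measurableSet_Ioi).add (hp.const_mul _)) hsplit
    _ = (∫⁻ w in Ioi (max t 1), p w) + ENNReal.ofReal B * ∫⁻ w in Ioi 1, p w := by
        rw [lintegral_add_left (hp.indicator measurableSet_Ioi), lintegral_const_mul _ hp,
          lintegral_indicator measurableSet_Ioi, Measure.restrict_restrict measurableSet_Ioi,
          Ioi_inter_Ioi]
    _ = ENNReal.ofReal (max t 1 ^ (-α)) + ENNReal.ofReal B := by
        rw [lintegral_Ioi_mul_rpow_neg_one_sub hα (lt_max_of_lt_right one_pos),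
          lintegral_Ioi_mul_rpow_neg_one_sub hα one_pos, Real.one_rpow, ENNReal.ofReal_one,
          mul_one]

lemma rpow_neg_max_div_le {s K α : ℝ} (hs : 0 ≤ s) (hK : 0 < K) (hα : 0 ≤ α) :
    max (s / K) 1 ^ (-α) ≤ (1 + K) ^ α * (1 + s) ^ (-α) := by
  have hmono : (1 + s) / (1 + K) ≤ max (s / K) 1 := by
    rw [div_le_iff₀ (by positivity)]
    have h1 : 1 ≤ max (s / K) 1 := le_max_right _ _
    have h2 : s / K ≤ max (s / K) 1 := le_max_left _ _
    have : s = s / K * K := by field_simp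
    nlinarith
  calc max (s / K) 1 ^ (-α) ≤ ((1 + s) / (1 + K)) ^ (-α) :=
        Real.rpow_le_rpow_of_nonpos (by positivity) hmono (by linarith)
    _ = (1 + K) ^ α * (1 + s) ^ (-α) := by
        rw [Real.div_rpow (by positivity) (by positivity), Real.rpow_neg (by positivity) α,
          Real.rpow_neg (by positivity) α]
        field_simp

lemma exp_mul_le_of_gaussian_decay {E : Type*} [NormedAddCommGroup E] {f : E → ℝ}
    {β c C K w : ℝ} {x : E} (hc : 0 < c) (hC : 0 ≤ C) (hK : 2 / c ≤ K) (hKβ : 2 * β / c ≤ K)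
    (hdecay : ∀ x : E, 2 / c ≤ ‖x‖ ^ 2 → f x ≤ C * Real.exp (-c * ‖x‖ ^ 2))
    (hw : 1 ≤ w) (hx : K * w ≤ ‖x‖ ^ 2) :
    Real.exp (β * w) * f x ≤ C * Real.exp (-(c / 2) * ‖x‖ ^ 2) := by
  have hKpos : 0 < K := (by positivity : 0 < 2 / c).trans_le hK
  have hx2 : 2 / c ≤ ‖x‖ ^ 2 := hK.trans (le_mul_of_one_le_right hKpos.le hw |>.trans hx)
  have hβw : β * w ≤ c / 2 * ‖x‖ ^ 2 := by
    have : 2 * β / c * w ≤ K * w := mul_le_mul_of_nonneg_right hKβ (by linarith)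
    calc β * w = c / 2 * (2 * β / c * w) := by field_simp
      _ ≤ c / 2 * ‖x‖ ^ 2 := by gcongr; linarith
  calc Real.exp (β * w) * f x ≤ Real.exp (β * w) * (C * Real.exp (-c * ‖x‖ ^ 2)) := by
        gcongr
        exact hdecay x hx2
    _ = C * Real.exp (β * w - c * ‖x‖ ^ 2) := by
        rw [sub_eq_add_neg, Real.exp_add, neg_mul]
        ring
    _ ≤ C * Real.exp (-(c / 2) * ‖x‖ ^ 2) := by
        gcongr
        linarith

lemma lintegral_rpow_neg_max_norm_sq_div_lt_top {E : Type*} [NormedAddCommGroup E]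
    [NormedSpace ℝ E] [FiniteDimensional ℝ E] [MeasurableSpace E] [BorelSpace E] {μ : Measure E}
    [μ.IsAddHaarMeasure] {K α : ℝ} (hK : 0 < K) (hα : (finrank ℝ E : ℝ) < 2 * α) :
    ∫⁻ x, ENNReal.ofReal (max (‖x‖ ^ 2 / K) 1 ^ (-α)) ∂μ < ⊤ := by
  have hα0 : 0 ≤ α := by linarith [(finrank ℝ E).cast_nonneg (α := ℝ)]
  have hint := (integrable_rpow_neg_one_add_norm_sq (μ := μ) hα).const_mul ((1 + K) ^ α)
  refine lt_of_le_of_lt (lintegral_mono fun x ↦ ENNReal.ofReal_le_ofReal ?_) hint.lintegral_lt_top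
  rw [show -(2 * α) / 2 = -α by ring]
  exact rpow_neg_max_div_le (by positivity) hK hα0

lemma integrable_exp_neg_mul_sq_norm {V : Type*} [NormedAddCommGroup V] [InnerProductSpace ℝ V]
    [FiniteDimensional ℝ V] [MeasurableSpace V] [BorelSpace V] {b : ℝ} (hb : 0 < b) :
    Integrable (fun x : V ↦ Real.exp (-b * ‖x‖ ^ 2)) := by
  refine (GaussianFourier.integrable_cexp_neg_mul_sq_norm_add (V := V) (b := b)
    (by simpa using hb) 0 0).norm.congr (.of_forall fun x ↦ ?_)
  simp [Complex.norm_exp, ← Complex.ofReal_pow]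

theorem stmt11_general (d : ℕ) (α β C c : ℝ)
    (hα1 : (d : ℝ) / 2 < α)
    (hC : 0 < C) (hc : 0 < c)
    (f : EuclideanSpace ℝ (Fin d) → ℝ)
    (hdecay : ∀ x : EuclideanSpace ℝ (Fin d), 2 / c ≤ ‖x‖ ^ 2 →
      f x ≤ C * Real.exp (-c * ‖x‖ ^ 2)) :
    (∫⁻ x, ∫⁻ w in Set.Ioi (1 : ℝ),
      ENNReal.ofReal (min (Real.exp (β * w) * f x) 1 * (α * w ^ (-(1 + α))))) < ⊤ := by
  have hα : 0 < α := lt_of_le_of_lt (by positivity) hα1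
  set K := max (2 * β / c) (2 / c)
  have hK : 2 / c ≤ K := le_max_right _ _
  have hKβ : 2 * β / c ≤ K := le_max_left _ _
  have hKpos : 0 < K := (by positivity : 0 < 2 / c).trans_le hK
  have hinner : ∀ x : EuclideanSpace ℝ (Fin d),
      ∫⁻ w in Ioi 1, ENNReal.ofReal (min (Real.exp (β * w) * f x) 1 * (α * w ^ (-(1 + α)))) ≤
        ENNReal.ofReal (max (‖x‖ ^ 2 / K) 1 ^ (-α)) +
          ENNReal.ofReal (C * Real.exp (-(c / 2) * ‖x‖ ^ 2)) := fun x ↦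
    setLIntegral_Ioi_one_cutoff_le hα (fun w ↦ min_le_right _ _) fun w hw hwx ↦
      (min_le_left _ _).trans <| exp_mul_le_of_gaussian_decay hc hC.le hK hKβ hdecay hw.le <| by
        rwa [le_div_iff₀' hKpos] at hwx
  refine (lintegral_mono hinner).trans_lt ?_
  rw [lintegral_add_left (by fun_prop)]
  refine ENNReal.add_lt_top.mpr ⟨lintegral_rpow_neg_max_norm_sq_div_lt_top hKpos ?_,
    ((integrable_exp_neg_mul_sq_norm (by positivity)).const_mul C).lintegral_lt_top⟩
  rw [finrank_euclideanSpace_fin]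
  linarith

/-- If `f : ℝ^d → [0,∞)` satisfies a Gaussian decay bound at infinity and the Green-function
type bound near the origin (`C'(1 + log(1/‖x‖)⁺)` if `d = 2`, `C'(1 + ‖x‖^{2−d})` if `d ≥ 3`),
and `α ∈ (d/2, 2)`, `β > 0`, then
`∫_{ℝ^d × (1,∞)} min(e^{βw} f(x), 1) · α w^{−(1+α)} dx dw < ∞`. -/
theorem stmt11 (d : ℕ) (hd : 2 ≤ d) (α β C c C' : ℝ)
    (hα1 : (d : ℝ) / 2 < α) (hα2 : α < 2) (hβ : 0 < β)
    (hC : 0 < C) (hc : 0 < c) (hC' : 0 < C')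
    (f : EuclideanSpace ℝ (Fin d) → ℝ) (hf : Measurable f) (hf0 : ∀ x, 0 ≤ f x)
    (hdecay : ∀ x : EuclideanSpace ℝ (Fin d), 2 / c ≤ ‖x‖ ^ 2 →
      f x ≤ C * Real.exp (-c * ‖x‖ ^ 2))
    (h2 : d = 2 → ∀ x : EuclideanSpace ℝ (Fin d), x ≠ 0 →
      f x ≤ C' * (1 + max (Real.log (1 / ‖x‖)) 0))
    (h3 : 3 ≤ d → ∀ x : EuclideanSpace ℝ (Fin d), x ≠ 0 →
      f x ≤ C' * (1 + ‖x‖ ^ ((2 : ℝ) - d))) :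
    (∫⁻ x, ∫⁻ w in Set.Ioi (1 : ℝ),
      ENNReal.ofReal (min (Real.exp (β * w) * f x) 1 * (α * w ^ (-(1 + α))))) < ⊤ :=
  stmt11_general d α β C c hα1 hC hc f hdecay
end

section
/- Let ω ≥ 0 be a random variable with P(ω > t) ≤ C t^{−α} for all t ≥ 1, where α ∈ (1,2), and let μ = E[ω]. For β ∈ (0,1] and k ≥ 1 with βk ≥ 1, let λ = log E[exp(β(ω−μ)1_{ω≤k})]. Then λ ≤ C' e^{βk} β^α for a constant C' depending only on C, α, μ. -/
/-!
Split according to whether `ω ≤ 1/β`. On that event the exponent `β(ω - μ)` is at most `1`, so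
`e^x ≤ 1 + x + x²` applies: the linear term is `-β E[(ω - μ) 1_{ω > 1/β}] ≤ β μ P(ω > 1/β)`, and
the quadratic term is controlled by `E[min(ω, 1/β)²] ≤ C β^{α-2}`, from the layer-cake formula.
Off that event the integrand is at most `e^{βk}`, and the event has probability at most `C β^α`.
Truncating at `1/β` rather than at `k` is what keeps the quadratic term of order `β^α`.
Finally `log u ≤ u - 1`.
-/

open MeasureTheory Set

theorem Real.exp_le_one_add_add_sq {x : ℝ} (hx : x ≤ 1) : Real.exp x ≤ 1 + x + x ^ 2 := by
  rcases le_or_gt (-1) x with hx' | hx'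
  · have h := Real.exp_bound (abs_le.2 ⟨hx', hx⟩) (n := 2) two_pos
    norm_num [Finset.sum_range_succ, Nat.factorial] at h
    nlinarith [(abs_le.1 h).2, sq_abs x]
  · nlinarith [Real.exp_le_one_iff.2 (by linarith : x ≤ 0)]

theorem exp_ite_le_of_le_inv {x μ₀ β k : ℝ} (hx : 0 ≤ x) (hμ₀ : 0 ≤ μ₀) (hβ : 0 < β)
    (hβk : 1 ≤ β * k) (hxβ : x ≤ β⁻¹) :
    Real.exp (if x ≤ k then β * (x - μ₀) else 0) ≤
      1 + β * (x - μ₀) + β ^ 2 * (x ^ 2 + μ₀ ^ 2) := by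
  have hxk : x ≤ k := hxβ.trans ((inv_le_iff_one_le_mul₀' hβ).2 hβk)
  have hβx : β * x ≤ 1 := by
    simpa [hβ.ne'] using mul_le_mul_of_nonneg_left hxβ hβ.le
  rw [if_pos hxk]
  calc Real.exp (β * (x - μ₀)) ≤ 1 + β * (x - μ₀) + (β * (x - μ₀)) ^ 2 :=
        Real.exp_le_one_add_add_sq (by nlinarith)
    _ ≤ _ := by nlinarith [mul_nonneg hx hμ₀, sq_nonneg β]

theorem sq_mul_inv_rpow_sub {β : ℝ} (hβ : 0 < β) (α : ℝ) : β ^ 2 * β⁻¹ ^ (2 - α) = β ^ α := by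
  rw [Real.inv_rpow hβ.le, ← Real.rpow_neg hβ.le, ← Real.rpow_two, ← Real.rpow_add hβ]
  congr 1; ring

theorem integral_mul_rpow_sub_one {p : ℝ} (hp : 0 < p) (x : ℝ) :
    ∫ t in (0 : ℝ)..x, p * t ^ (p - 1) = x ^ p := by
  rw [intervalIntegral.integral_const_mul, integral_rpow (Or.inl (by linarith)),
    sub_add_cancel, Real.zero_rpow hp.ne', sub_zero, mul_div_cancel₀ _ hp.ne']

section
variable {Ω : Type*} [MeasurableSpace Ω] {μ : Measure Ω} {X : Ω → ℝ} {C α : ℝ}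

theorem integrable_exp_ite_mul_sub [IsFiniteMeasure μ] (hX : Measurable X) {β k μ₀ : ℝ}
    (hβ : 0 ≤ β) : Integrable (fun a => Real.exp (if X a ≤ k then β * (X a - μ₀) else 0)) μ :=
  .of_bound (Measurable.ite (measurableSet_le hX measurable_const) (by fun_prop)
      measurable_const).exp.aestronglyMeasurable (Real.exp (max (β * (k - μ₀)) 0))
    (ae_of_all _ fun a => by
      rw [Real.norm_of_nonneg (Real.exp_nonneg _), Real.exp_le_exp]
      split_ifs with hXk
      · exact le_max_of_le_left (by nlinarith)
      · exact le_max_right _ _)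

variable [IsProbabilityMeasure μ]

theorem measureReal_lt_le_of_tail (hC : 0 ≤ C) (hα : 0 ≤ α)
    (tail : ∀ t : ℝ, 1 ≤ t → μ.real {a | t < X a} ≤ C * t ^ (-α)) {t : ℝ} (ht : 0 < t) :
    μ.real {a | t < X a} ≤ (1 + C) * t ^ (-α) := by
  have ht_pos : 0 ≤ t ^ (-α) := by positivity
  rcases le_or_gt 1 t with ht1 | ht1
  · linarith [tail t ht1]
  · have : 1 ≤ t ^ (-α) := Real.one_le_rpow_of_pos_of_le_one_of_nonpos ht ht1.le (by linarith)
    nlinarith [measureReal_le_one (μ := μ) (s := {a | t < X a})]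

theorem measure_lt_min_mul_le_indicator (hC : 0 ≤ C) (hα : 0 ≤ α)
    (tail : ∀ t : ℝ, 1 ≤ t → μ.real {a | t < X a} ≤ C * t ^ (-α)) {p m t : ℝ} (ht : 0 < t) :
    μ {a | t < min (X a) m} * ENNReal.ofReal (p * t ^ (p - 1))
      ≤ (Iic m).indicator (fun t => ENNReal.ofReal (p * (1 + C) * t ^ (p - 1 - α))) t := by
  rcases le_or_gt t m with htm | htm
  · have hsub : {a | t < min (X a) m} ⊆ {a | t < X a} := fun a (ha : t < min (X a) m) =>
      show t < X a from ha.trans_le (min_le_left _ _)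
    have hprob : μ {a | t < X a} ≤ ENNReal.ofReal ((1 + C) * t ^ (-α)) := by
      rw [← ENNReal.ofReal_toReal (measure_ne_top μ _)]
      exact ENNReal.ofReal_le_ofReal (measureReal_lt_le_of_tail hC hα tail ht)
    have hexp : (1 + C) * t ^ (-α) * (p * t ^ (p - 1)) = p * (1 + C) * t ^ (p - 1 - α) := by
      rw [sub_eq_add_neg (p - 1), Real.rpow_add ht]; ring
    rw [indicator_of_mem (mem_Iic.2 htm), ← hexp,
      ENNReal.ofReal_mul (p := (1 + C) * t ^ (-α)) (by positivity)]
    exact mul_le_mul_left ((measure_mono hsub).trans hprob) _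
  · have hempty : {a | t < min (X a) m} = ∅ :=
      eq_empty_of_forall_notMem fun a ha => (min_le_right _ _).not_gt (htm.trans ha)
    rw [hempty, measure_empty, zero_mul]
    exact bot_le

theorem integral_min_rpow_le_of_tail (hX : Measurable X) (hXnn : ∀ a, 0 ≤ X a)
    (hC : 0 ≤ C) (hα : 0 ≤ α) (tail : ∀ t : ℝ, 1 ≤ t → μ.real {a | t < X a} ≤ C * t ^ (-α))
    {p m : ℝ} (hαp : α < p) (hm : 0 ≤ m) :
    ∫ a, min (X a) m ^ p ∂μ ≤ p * (1 + C) / (p - α) * m ^ (p - α) := by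
  have hp : 0 < p := hα.trans_lt hαp
  have hf_nn : ∀ a, 0 ≤ min (X a) m := fun a => le_min (hXnn a) hm
  have layer := lintegral_comp_eq_lintegral_meas_lt_mul μ (Filter.Eventually.of_forall hf_nn)
    (hX.min measurable_const).aemeasurable (g := fun t => p * t ^ (p - 1))
    (fun t _ => (intervalIntegral.intervalIntegrable_rpow' (by linarith)).const_mul p)
    (ae_restrict_of_forall_mem measurableSet_Ioi fun t ht =>
      mul_nonneg hp.le (Real.rpow_nonneg (le_of_lt ht) _))
  simp only [integral_mul_rpow_sub_one hp] at layer
  have hint : IntegrableOn (fun t : ℝ => p * (1 + C) * t ^ (p - 1 - α)) (Ioc 0 m) := by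
    rw [← intervalIntegrable_iff_integrableOn_Ioc_of_le hm]
    exact (intervalIntegral.intervalIntegrable_rpow' (by linarith)).const_mul _
  have bound : ∫⁻ a, ENNReal.ofReal (min (X a) m ^ p) ∂μ
      ≤ ENNReal.ofReal (p * (1 + C) / (p - α) * m ^ (p - α)) := by
    calc ∫⁻ a, ENNReal.ofReal (min (X a) m ^ p) ∂μ
        ≤ ∫⁻ t in Ioi 0, (Iic m).indicator
            (fun t => ENNReal.ofReal (p * (1 + C) * t ^ (p - 1 - α))) t := by
          rw [layer]
          exact setLIntegral_mono' measurableSet_Ioi fun t ht =>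
            measure_lt_min_mul_le_indicator hC hα tail ht
      _ = ∫⁻ t in Ioc 0 m, ENNReal.ofReal (p * (1 + C) * t ^ (p - 1 - α)) := by
          rw [lintegral_indicator measurableSet_Iic, Measure.restrict_restrict measurableSet_Iic,
            Iic_inter_Ioi]
      _ = _ := by
          rw [← ofReal_integral_eq_lintegral_ofReal hint, ← intervalIntegral.integral_of_le hm,
            intervalIntegral.integral_const_mul, integral_rpow (Or.inl (by linarith)),
            show p - 1 - α + 1 = p - α by ring, Real.zero_rpow (by linarith), sub_zero]
          · congr 1; ring
          · exact ae_restrict_of_forall_mem measurableSet_Ioc fun t ht =>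
              mul_nonneg (by positivity) (Real.rpow_nonneg ht.1.le _)
  rw [integral_eq_lintegral_of_nonneg_ae
    (Filter.Eventually.of_forall fun a => Real.rpow_nonneg (hf_nn a) p)
    ((hX.min measurable_const).pow_const p).aestronglyMeasurable]
  exact ENNReal.toReal_le_of_le_ofReal (by have := sub_pos.2 hαp; positivity) bound

theorem setIntegral_sub_integral_le (hXint : Integrable X μ) (hXnn : ∀ a, 0 ≤ X a)
    {s : Set Ω} (hs : MeasurableSet s) :
    ∫ a in s, (X a - ∫ b, X b ∂μ) ∂μ ≤ (∫ b, X b ∂μ) * μ.real sᶜ := by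
  set c := ∫ b, X b ∂μ
  have hcentered : ∫ a, (X a - c) ∂μ = 0 := by
    rw [integral_sub hXint (integrable_const c), integral_const, probReal_univ, one_smul, sub_self]
  have hcompl : -(c * μ.real sᶜ) ≤ ∫ a in sᶜ, (X a - c) ∂μ := by
    rw [integral_sub hXint.integrableOn (integrable_const c), setIntegral_const, smul_eq_mul,
      mul_comm]
    linarith [setIntegral_nonneg (μ := μ) hs.compl fun a _ => hXnn a]
  linarith [integral_add_compl hs (f := fun a => X a - c) (hXint.sub (integrable_const c))]

theorem setIntegral_exp_truncated_le (hX : Measurable X) (hXnn : ∀ a, 0 ≤ X a)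
    (hXint : Integrable X μ) {μ₀ β k : ℝ} (hμ₀ : 0 ≤ μ₀) (hβ : 0 < β) (hβk : 1 ≤ β * k) :
    ∫ a in {a | X a ≤ β⁻¹}, Real.exp (if X a ≤ k then β * (X a - μ₀) else 0) ∂μ ≤
      μ.real {a | X a ≤ β⁻¹} + β * ∫ a in {a | X a ≤ β⁻¹}, (X a - μ₀) ∂μ
        + β ^ 2 * (∫ a, min (X a) β⁻¹ ^ 2 ∂μ + μ₀ ^ 2) := by
  set m := β⁻¹
  set E := {a | X a ≤ m}
  have hsq_int : Integrable (fun a => min (X a) m ^ 2) μ :=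
    .of_bound (by fun_prop) (m ^ 2) (ae_of_all _ fun a => by
      rw [Real.norm_of_nonneg (sq_nonneg _)]
      exact pow_le_pow_left₀ (le_min (hXnn a) (by positivity)) (min_le_right _ _) 2)
  have hquad_int : Integrable (fun a => min (X a) m ^ 2 + μ₀ ^ 2) μ :=
    hsq_int.add (integrable_const _)
  have hlin_E : IntegrableOn (fun a => β * (X a - μ₀)) E μ :=
    ((hXint.sub (integrable_const _)).const_mul β).integrableOn
  have hone_lin_E : IntegrableOn (fun a => 1 + β * (X a - μ₀)) E μ :=
    (integrable_const 1).integrableOn.add hlin_E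
  have hquad_E : IntegrableOn (fun a => β ^ 2 * (min (X a) m ^ 2 + μ₀ ^ 2)) E μ :=
    (hquad_int.const_mul _).integrableOn
  calc _ ≤ ∫ a in E, (1 + β * (X a - μ₀) + β ^ 2 * (min (X a) m ^ 2 + μ₀ ^ 2)) ∂μ := by
        refine setIntegral_mono_on (integrable_exp_ite_mul_sub hX hβ.le).integrableOn
          (hone_lin_E.add hquad_E) (measurableSet_le hX measurable_const)
          fun a (ha : X a ≤ m) => ?_
        rw [min_eq_left ha]; exact exp_ite_le_of_le_inv (hXnn a) hμ₀ hβ hβk ha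
    _ = μ.real E + β * ∫ a in E, (X a - μ₀) ∂μ
          + β ^ 2 * ∫ a in E, (min (X a) m ^ 2 + μ₀ ^ 2) ∂μ := by
        rw [integral_add hone_lin_E hquad_E,
          integral_add (integrable_const 1).integrableOn hlin_E,
          integral_const_mul, integral_const_mul, setIntegral_const, smul_eq_mul, mul_one]
    _ ≤ _ := by
        gcongr
        calc ∫ a in E, (min (X a) m ^ 2 + μ₀ ^ 2) ∂μ ≤ ∫ a, (min (X a) m ^ 2 + μ₀ ^ 2) ∂μ :=
              setIntegral_le_integral hquad_int (ae_of_all _ fun a => by positivity)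
          _ = _ := by
              rw [integral_add hsq_int (integrable_const _), integral_const, probReal_univ,
                one_smul]

theorem integral_exp_truncated_le (hX : Measurable X) (hXnn : ∀ a, 0 ≤ X a)
    (hXint : Integrable X μ) {μ₀ : ℝ} (hmean : ∫ a, X a ∂μ = μ₀) {β k : ℝ} (hβ : 0 < β)
    (hβk : 1 ≤ β * k) :
    ∫ a, Real.exp (if X a ≤ k then β * (X a - μ₀) else 0) ∂μ ≤
      1 + (β * μ₀ + Real.exp (β * k)) * μ.real {a | β⁻¹ < X a}
        + β ^ 2 * (∫ a, min (X a) β⁻¹ ^ 2 ∂μ + μ₀ ^ 2) := by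
  have hμ₀ : 0 ≤ μ₀ := hmean ▸ integral_nonneg hXnn
  set E := {a | X a ≤ β⁻¹}
  have hE : MeasurableSet E := measurableSet_le hX measurable_const
  have hEc : Eᶜ = {a | β⁻¹ < X a} := by ext a; simp [E]
  have on_Ec : ∫ a in Eᶜ, Real.exp (if X a ≤ k then β * (X a - μ₀) else 0) ∂μ
      ≤ Real.exp (β * k) * μ.real Eᶜ := by
    refine (Real.le_norm_self _).trans
      (norm_setIntegral_le_of_norm_le_const (measure_lt_top _ _) fun a _ => ?_)
    rw [Real.norm_of_nonneg (Real.exp_nonneg _), Real.exp_le_exp]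
    split_ifs
    · nlinarith [hXnn a]
    · linarith
  have on_E_linear : β * ∫ a in E, (X a - μ₀) ∂μ ≤ β * (μ₀ * μ.real Eᶜ) := by
    have h := setIntegral_sub_integral_le hXint hXnn hE
    rw [hmean] at h
    exact mul_le_mul_of_nonneg_left h hβ.le
  rw [← integral_add_compl hE (integrable_exp_ite_mul_sub hX hβ.le), ← hEc]
  linarith [measureReal_le_one (μ := μ) (s := E),
    setIntegral_exp_truncated_le hX hXnn hXint hμ₀ hβ hβk (μ := μ) (k := k)]

theorem sq_mul_integral_min_inv_sq_le (hX : Measurable X) (hXnn : ∀ a, 0 ≤ X a) (hC : 0 ≤ C)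
    (hα : 0 ≤ α) (hα2 : α < 2) (tail : ∀ t : ℝ, 1 ≤ t → μ.real {a | t < X a} ≤ C * t ^ (-α))
    {β : ℝ} (hβ : 0 < β) :
    β ^ 2 * ∫ a, min (X a) β⁻¹ ^ 2 ∂μ ≤ 2 * (1 + C) / (2 - α) * β ^ α := by
  have h := integral_min_rpow_le_of_tail hX hXnn hC hα tail hα2 (inv_nonneg.2 hβ.le)
  simp only [Real.rpow_two] at h
  calc β ^ 2 * ∫ a, min (X a) β⁻¹ ^ 2 ∂μ
      ≤ β ^ 2 * (2 * (1 + C) / (2 - α) * β⁻¹ ^ (2 - α)) := by gcongr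
    _ = 2 * (1 + C) / (2 - α) * β ^ α := by rw [mul_left_comm, sq_mul_inv_rpow_sub hβ]

theorem log_integral_exp_truncated_le (hX : Measurable X) (hXnn : ∀ a, 0 ≤ X a)
    (hXint : Integrable X μ) {μ₀ : ℝ} (hmean : ∫ a, X a ∂μ = μ₀) (hC : 0 ≤ C) (hα : 0 ≤ α)
    (hα2 : α < 2) (tail : ∀ t : ℝ, 1 ≤ t → μ.real {a | t < X a} ≤ C * t ^ (-α))
    {β k : ℝ} (hβ0 : 0 < β) (hβ1 : β ≤ 1) (hβk : 1 ≤ β * k) :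
    Real.log (∫ a, Real.exp (if X a ≤ k then β * (X a - μ₀) else 0) ∂μ) ≤
      (C * (1 + μ₀) + 2 * (1 + C) / (2 - α) + μ₀ ^ 2) * Real.exp (β * k) * β ^ α := by
  have hμ₀ : 0 ≤ μ₀ := hmean ▸ integral_nonneg hXnn
  have htail : μ.real {a | β⁻¹ < X a} ≤ C * β ^ α := by
    simpa [Real.inv_rpow hβ0.le, Real.rpow_neg hβ0.le] using tail β⁻¹ ((one_le_inv₀ hβ0).2 hβ1)
  have hβ2 : β ^ 2 ≤ β ^ α := by
    rw [← Real.rpow_two]; exact Real.rpow_le_rpow_of_exponent_ge hβ0 hβ1 hα2.le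
  have he : 1 ≤ Real.exp (β * k) := Real.one_le_exp (by positivity)
  have hC₂ : 0 ≤ 2 * (1 + C) / (2 - α) := div_nonneg (by linarith) (by linarith)
  have hslack :
      0 ≤ (C * μ₀ + 2 * (1 + C) / (2 - α) + μ₀ ^ 2) * β ^ α * (Real.exp (β * k) - 1) := by
    positivity
  calc Real.log _ ≤ _ - 1 :=
        Real.log_le_sub_one_of_pos (integral_exp_pos (integrable_exp_ite_mul_sub hX hβ0.le))
    _ ≤ (β * μ₀ + Real.exp (β * k)) * μ.real {a | β⁻¹ < X a}
          + β ^ 2 * ∫ a, min (X a) β⁻¹ ^ 2 ∂μ + μ₀ ^ 2 * β ^ 2 := by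
        linarith [integral_exp_truncated_le hX hXnn hXint hmean hβ0 hβk]
    _ ≤ (μ₀ + Real.exp (β * k)) * (C * β ^ α) + 2 * (1 + C) / (2 - α) * β ^ α
          + μ₀ ^ 2 * β ^ α := by
        gcongr (?_ + _) * ?_ + ?_ + _ * ?_
        · exact mul_le_of_le_one_left hμ₀ hβ1
        · exact sq_mul_integral_min_inv_sq_le hX hXnn hC hα hα2 tail hβ0
    _ ≤ _ := by linear_combination hslack

end

/-- Bound on the log-moment generating function of the truncated centered environment:
if `ω ≥ 0` has tail `P(ω > t) ≤ C t^{−α}` for `t ≥ 1` with `α ∈ (1,2)` and mean `μ₀`,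
then for `β ∈ (0,1]` and `k ≥ 1` with `βk ≥ 1`,
`λ = log E[exp(β(ω−μ₀)1_{ω≤k})] ≤ C' e^{βk} β^α`, where `C'` depends only on `C`, `α`, `μ₀`. -/
theorem stmt15 (C α μ₀ : ℝ) (hC : 0 < C) (hα1 : 1 < α) (hα2 : α < 2) :
    ∃ C' : ℝ, 0 < C' ∧
      ∀ (Ω : Type) (_ : MeasurableSpace Ω) (μ : Measure Ω), IsProbabilityMeasure μ →
      ∀ X : Ω → ℝ, Measurable X → (∀ a, 0 ≤ X a) → Integrable X μ →
        (∫ a, X a ∂μ) = μ₀ →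
        (∀ t : ℝ, 1 ≤ t → (μ {a | t < X a}).toReal ≤ C * t ^ (-α)) →
        ∀ β k : ℝ, 0 < β → β ≤ 1 → 1 ≤ k → 1 ≤ β * k →
          Real.log (∫ a, Real.exp (if X a ≤ k then β * (X a - μ₀) else 0) ∂μ) ≤
            C' * Real.exp (β * k) * β ^ α := by
  have hC₂ : 0 < 2 * (1 + C) / (2 - α) := div_pos (by linarith) (by linarith)
  refine ⟨C * (1 + |μ₀|) + 2 * (1 + C) / (2 - α) + μ₀ ^ 2, by positivity, ?_⟩
  intro Ω _ μ _ X hX hXnn hXint hmean tail β k hβ0 hβ1 _ hβk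
  rw [abs_of_nonneg (hmean ▸ integral_nonneg hXnn)]
  exact log_integral_exp_truncated_le hX hXnn hXint hmean hC.le (by linarith) hα2 tail hβ0 hβ1 hβk
end
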